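/- arXiv:math/0210485 — 2 statements merged into one kernel-verified Lean document; each statement's English description precedes it below -/
import Mathlib

section
/- Let H₀, H₁, H₂ be complex Hilbert spaces and let T : H₀ → H₁ and S : H₁ → H₂ be closed, densely defined linear operators with Ran T ⊆ Ker S. Assume the compactness property: every sequence (u_k) in Dom S ∩ Dom T* with sup_k ‖u_k‖ < ∞, ‖S u_k‖ → 0 and ‖T* u_k‖ → 0 has a subsequence converging in H₁. Then Ker S is the orthogonal direct sum of Ran T and the harmonic space ℋ = Ker S ∩ Ker T*: Ran T ⊆ Ker S is closed, Ran T ⟂ ℋ, and every u ∈ Ker S can be written u = Tv + h with v ∈ Dom T and h ∈ ℋ. In particular, Ran T has finite codimension in Ker S. -/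
open Filter

variable {H₀ H₁ H₂ : Type*}
  [NormedAddCommGroup H₀] [InnerProductSpace ℂ H₀] [CompleteSpace H₀]
  [NormedAddCommGroup H₁] [InnerProductSpace ℂ H₁] [CompleteSpace H₁]
  [NormedAddCommGroup H₂] [InnerProductSpace ℂ H₂] [CompleteSpace H₂]

/-- The compactness property for the pair `(T, S)`:  every sequence `uₖ` in
`Dom S ∩ Dom T.adjoint` which is bounded in `H₁` and satisfies `‖S uₖ‖ → 0` and
`‖T.adjoint uₖ‖ → 0` admits a norm-convergent subsequence.  Membership in the domain together
with the value of the operator is encoded via graphs: `(u, s) ∈ S.graph` means `u ∈ Dom S` and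
`S u = s`. -/
def CompactnessProperty (T : H₀ →ₗ.[ℂ] H₁) (S : H₁ →ₗ.[ℂ] H₂) : Prop :=
  ∀ (u : ℕ → H₁) (s : ℕ → H₂) (t : ℕ → H₀),
    (∀ k, (u k, s k) ∈ S.graph) → (∀ k, (u k, t k) ∈ T.adjoint.graph) →
    (∃ M : ℝ, ∀ k, ‖u k‖ ≤ M) →
    Tendsto (fun k => ‖s k‖) atTop (nhds 0) →
    Tendsto (fun k => ‖t k‖) atTop (nhds 0) →
    ∃ (φ : ℕ → ℕ) (L : H₁), StrictMono φ ∧ Tendsto (u ∘ φ) atTop (nhds L)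

/-- The harmonic space `ℋ = Ker S ∩ Ker T*` as a subspace of `H₁`:
`u ∈ ℋ` iff `(u, 0) ∈ S.graph` (i.e. `u ∈ Dom S` and `S u = 0`) and `(u, 0) ∈ T.adjoint.graph`
(i.e. `u ∈ Dom T*` and `T* u = 0`). -/
noncomputable def harmonicSpace (T : H₀ →ₗ.[ℂ] H₁) (S : H₁ →ₗ.[ℂ] H₂) : Submodule ℂ H₁ :=
  (S.graph.comap ((LinearMap.id : H₁ →ₗ[ℂ] H₁).prod (0 : H₁ →ₗ[ℂ] H₂))) ⊓
  (T.adjoint.graph.comap ((LinearMap.id : H₁ →ₗ[ℂ] H₁).prod (0 : H₁ →ₗ[ℂ] H₀)))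

/-- The range of the partially defined operator `T`, as a subspace of `H₁`. -/
noncomputable def pmapRange (T : H₀ →ₗ.[ℂ] H₁) : Submodule ℂ H₁ :=
  T.graph.map (LinearMap.snd ℂ H₀ H₁)

/-- The kernel `Ker S = {u ∈ Dom S | S u = 0}` of the partially defined operator `S`,
as a subspace of `H₁`. -/
noncomputable def pmapKer (S : H₁ →ₗ.[ℂ] H₂) : Submodule ℂ H₁ :=
  S.graph.comap ((LinearMap.id : H₁ →ₗ[ℂ] H₁).prod (0 : H₁ →ₗ[ℂ] H₂))

set_option linter.unusedSectionVars false
set_option maxHeartbeats 1000000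

local notation "⟪" x ", " y "⟫" => @inner ℂ _ _ x y

lemma mem_pmapKer_iff (S : H₁ →ₗ.[ℂ] H₂) (u : H₁) : u ∈ pmapKer S ↔ (u, (0:H₂)) ∈ S.graph := Iff.rfl

lemma adj_graph_iff {T : H₀ →ₗ.[ℂ] H₁} (hT : Dense (T.domain : Set H₀)) (y : H₁) (w : H₀) :
    (y, w) ∈ T.adjoint.graph ↔ ∀ x : T.domain, ⟪w, (x : H₀)⟫ = ⟪y, T x⟫ := by
  constructor
  · intro h
    rw [LinearPMap.mem_graph_iff] at h
    obtain ⟨y', hy', hw⟩ := h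
    intro x
    have h2 := LinearPMap.adjoint_isFormalAdjoint hT y' x
    simpa only [hy', hw] using h2
  · intro h
    have hmem : y ∈ T.adjoint.domain := LinearPMap.mem_adjoint_domain_of_exists _ ⟨w, h⟩
    have : T.adjoint ⟨y, hmem⟩ = w := LinearPMap.adjoint_apply_eq hT ⟨y, hmem⟩ h
    rw [LinearPMap.mem_graph_iff]
    exact ⟨⟨y, hmem⟩, rfl, this⟩

lemma adj_graph_closed {T : H₀ →ₗ.[ℂ] H₁} (hT : Dense (T.domain : Set H₀)) :
    IsClosed (T.adjoint.graph : Set (H₁ × H₀)) := by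
  have : (T.adjoint.graph : Set (H₁ × H₀)) =
      ⋂ x : T.domain, {p : H₁ × H₀ | ⟪p.2, (x : H₀)⟫ = ⟪p.1, T x⟫} := by
    ext ⟨y, w⟩
    simp only [Set.mem_iInter, Set.mem_setOf_eq, SetLike.mem_coe, adj_graph_iff hT]
  rw [this]
  exact isClosed_iInter fun x => isClosed_eq
    (Continuous.inner continuous_snd continuous_const)
    (Continuous.inner continuous_fst continuous_const)

lemma mem_harmonic_iff (T : H₀ →ₗ.[ℂ] H₁) (S : H₁ →ₗ.[ℂ] H₂) (u : H₁) :
    u ∈ harmonicSpace T S ↔ (u, (0:H₂)) ∈ S.graph ∧ (u, (0:H₀)) ∈ T.adjoint.graph := Iff.rfl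

lemma mem_pmapRange_iff (T : H₀ →ₗ.[ℂ] H₁) (u : H₁) :
    u ∈ pmapRange T ↔ ∃ v, (v, u) ∈ T.graph := by
  simp only [pmapRange, Submodule.mem_map]
  constructor
  · rintro ⟨⟨v, u'⟩, h, rfl⟩; exact ⟨v, h⟩
  · rintro ⟨v, h⟩; exact ⟨(v, u), h, rfl⟩

lemma ker_closed' {S : H₁ →ₗ.[ℂ] H₂} (hS : IsClosed (S.graph : Set (H₁ × H₂))) :
    IsClosed ((pmapKer S : Submodule ℂ H₁) : Set H₁) := by
  have : ((pmapKer S : Submodule ℂ H₁) : Set H₁) =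
      (fun u : H₁ => (u, (0:H₂))) ⁻¹' (S.graph : Set (H₁ × H₂)) := rfl
  rw [this]
  exact hS.preimage (continuous_id.prodMk continuous_const)

lemma harmonic_closed {T : H₀ →ₗ.[ℂ] H₁} {S : H₁ →ₗ.[ℂ] H₂}
    (hT : Dense (T.domain : Set H₀)) (hS : IsClosed (S.graph : Set (H₁ × H₂))) :
    IsClosed ((harmonicSpace T S : Submodule ℂ H₁) : Set H₁) := by
  have h1 : ((harmonicSpace T S : Submodule ℂ H₁) : Set H₁) =
      ((fun u : H₁ => (u, (0:H₂))) ⁻¹' (S.graph : Set (H₁ × H₂))) ∩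
      ((fun u : H₁ => (u, (0:H₀))) ⁻¹' (T.adjoint.graph : Set (H₁ × H₀))) := rfl
  rw [h1]
  exact (hS.preimage (continuous_id.prodMk continuous_const)).inter
    ((adj_graph_closed hT).preimage (continuous_id.prodMk continuous_const))

lemma orth_ker_mem_adj {T : H₀ →ₗ.[ℂ] H₁} {S : H₁ →ₗ.[ℂ] H₂}
    (hTdense : Dense (T.domain : Set H₀))
    (hRanKer : ∀ (x : H₀) (y : H₁), (x, y) ∈ T.graph → (y, (0 : H₂)) ∈ S.graph)
    {w : H₁} (hw : w ∈ (pmapKer S)ᗮ) : (w, (0:H₀)) ∈ T.adjoint.graph := by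
  rw [adj_graph_iff hTdense]
  intro x
  have hTx : T x ∈ pmapKer S := hRanKer x (T x) (T.mem_graph x)
  have := (Submodule.mem_orthogonal _ w).mp hw _ hTx
  rw [inner_zero_left]
  rw [← inner_conj_symm, this, map_zero]

lemma harmonic_findim {T : H₀ →ₗ.[ℂ] H₁} {S : H₁ →ₗ.[ℂ] H₂}
    (hTdense : Dense (T.domain : Set H₀)) (hSclosed : S.IsClosed)
    (hcpt : CompactnessProperty T S) :
    FiniteDimensional ℂ (harmonicSpace T S) := by
  have hKc : IsClosed ((harmonicSpace T S : Submodule ℂ H₁) : Set H₁) :=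
    harmonic_closed hTdense hSclosed
  have hcompact : IsCompact (Metric.closedBall (0 : harmonicSpace T S) 1) := by
    rw [isCompact_iff_isSeqCompact]
    intro u hu
    have hnorm : ∀ k, ‖(u k : H₁)‖ ≤ 1 := by
      intro k
      have := Metric.mem_closedBall.mp (hu k)
      rw [dist_zero_right] at this
      exact this
    obtain ⟨φ, L, hφ, hL⟩ := hcpt (fun k => (u k : H₁)) (fun _ => 0) (fun _ => 0)
      (fun k => ((mem_harmonic_iff T S _).mp (u k).2).1)
      (fun k => ((mem_harmonic_iff T S _).mp (u k).2).2)
      ⟨1, hnorm⟩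
      (by simpa using (tendsto_const_nhds : Tendsto (fun _ : ℕ => (0:ℝ)) atTop (nhds 0)))
      (by simpa using (tendsto_const_nhds : Tendsto (fun _ : ℕ => (0:ℝ)) atTop (nhds 0)))
    have hLK : L ∈ harmonicSpace T S :=
      hKc.mem_of_tendsto hL (Eventually.of_forall fun k => (u (φ k)).2)
    have hLn : ‖L‖ ≤ 1 :=
      le_of_tendsto hL.norm (Eventually.of_forall fun k => hnorm (φ k))
    refine ⟨⟨L, hLK⟩, Metric.mem_closedBall.mpr (by rwa [dist_zero_right]), φ, hφ, ?_⟩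
    rw [tendsto_subtype_rng]
    exact hL
  exact FiniteDimensional.of_isCompact_closedBall₀ ℂ one_pos hcompact

lemma coercive {T : H₀ →ₗ.[ℂ] H₁} {S : H₁ →ₗ.[ℂ] H₂}
    (hTdense : Dense (T.domain : Set H₀)) (hSclosed : S.IsClosed)
    (hcpt : CompactnessProperty T S) :
    ∃ C : ℝ, 0 ≤ C ∧ ∀ u t, (u, (0:H₂)) ∈ S.graph → (u, t) ∈ T.adjoint.graph →
      u ∈ (harmonicSpace T S)ᗮ → ‖u‖ ≤ C * ‖t‖ := by
  by_contra hc
  push_neg at hc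
  have key : ∀ k : ℕ, ∃ u t, (u, (0:H₂)) ∈ S.graph ∧ (u, t) ∈ T.adjoint.graph ∧
      u ∈ (harmonicSpace T S)ᗮ ∧ (k+1 : ℝ) * ‖t‖ < ‖u‖ := by
    intro k
    obtain ⟨u, t, h1, h2, h3, h4⟩ := hc (k+1 : ℝ) (by positivity)
    exact ⟨u, t, h1, h2, h3, h4⟩
  choose u t h1 h2 h3 h4 using key
  have hune : ∀ k, u k ≠ 0 := by
    intro k hk
    have := h4 k
    rw [hk, norm_zero] at this
    nlinarith [norm_nonneg (t k), this]
  set w : ℕ → H₁ := fun k => ((‖u k‖⁻¹ : ℝ) : ℂ) • u k with hw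
  set r : ℕ → H₀ := fun k => ((‖u k‖⁻¹ : ℝ) : ℂ) • t k with hr
  have hwn : ∀ k, ‖w k‖ = 1 := by
    intro k
    rw [hw]
    simp only [norm_smul, Complex.norm_real, norm_inv, norm_norm]
    rw [inv_mul_cancel₀ (norm_ne_zero_iff.mpr (hune k))]
  have hrb : ∀ k, ‖r k‖ ≤ 1 / (k+1 : ℝ) := by
    intro k
    have hk4 := h4 k
    have hupos : (0:ℝ) < ‖u k‖ := norm_pos_iff.mpr (hune k)
    rw [hr]
    simp only [norm_smul, Complex.norm_real, norm_inv, norm_norm]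
    have hkp : (0:ℝ) < (k:ℝ)+1 := by positivity
    calc ‖u k‖⁻¹ * ‖t k‖ ≤ ‖u k‖⁻¹ * (‖u k‖ / ((k:ℝ)+1)) := by
          gcongr
          rw [le_div_iff₀ hkp]
          nlinarith
      _ = 1/((k:ℝ)+1) := by field_simp
  have hwS : ∀ k, (w k, (0:H₂)) ∈ S.graph := by
    intro k
    have h := S.graph.smul_mem ((‖u k‖⁻¹ : ℝ) : ℂ) (h1 k)
    rw [Prod.smul_mk, smul_zero] at h
    exact h
  have hwT : ∀ k, (w k, r k) ∈ T.adjoint.graph := by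
    intro k
    have h := T.adjoint.graph.smul_mem ((‖u k‖⁻¹ : ℝ) : ℂ) (h2 k)
    rw [Prod.smul_mk] at h
    exact h
  have hrt : Tendsto (fun k => ‖r k‖) atTop (nhds 0) :=
    squeeze_zero (fun k => norm_nonneg _) hrb tendsto_one_div_add_atTop_nhds_zero_nat
  obtain ⟨φ, L, hφ, hL⟩ := hcpt w (fun _ => 0) r hwS hwT ⟨1, fun k => (hwn k).le⟩
    (by simpa using (tendsto_const_nhds : Tendsto (fun _ : ℕ => (0:ℝ)) atTop (nhds 0))) hrt
  -- L ∈ harmonic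
  have hrφ : Tendsto (r ∘ φ) atTop (nhds 0) := by
    rw [tendsto_zero_iff_norm_tendsto_zero]
    exact squeeze_zero (fun k => norm_nonneg _)
      (fun k => (hrb (φ k)).trans (one_div_le_one_div_of_le (by positivity)
        (by have h9 : k ≤ φ k := hφ.le_apply; exact add_le_add (Nat.cast_le.mpr h9) le_rfl)))
      tendsto_one_div_add_atTop_nhds_zero_nat
  have hLT : (L, (0:H₀)) ∈ T.adjoint.graph := by
    have : Tendsto (fun k => (w (φ k), r (φ k))) atTop (nhds (L, 0)) := hL.prodMk_nhds hrφ
    exact (adj_graph_closed hTdense).mem_of_tendsto this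
      (Eventually.of_forall fun k => hwT (φ k))
  have hLS : (L, (0:H₂)) ∈ S.graph := by
    have : Tendsto (fun k => (w (φ k), (0:H₂))) atTop (nhds (L, 0)) :=
      hL.prodMk_nhds tendsto_const_nhds
    exact hSclosed.mem_of_tendsto this (Eventually.of_forall fun k => hwS (φ k))
  have hLH : L ∈ harmonicSpace T S := ⟨hLS, hLT⟩
  have hwo : ∀ k, w k ∈ (harmonicSpace T S)ᗮ :=
    fun k => Submodule.smul_mem _ _ (h3 k)
  have hLo : L ∈ (harmonicSpace T S)ᗮ :=
    (harmonicSpace T S).isClosed_orthogonal.mem_of_tendsto hL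
      (Eventually.of_forall fun k => hwo (φ k))
  have hL0 : L = 0 := by
    have := (Submodule.mem_orthogonal _ L).mp hLo L hLH
    rwa [inner_self_eq_zero] at this
  have hL1 : ‖L‖ = 1 := by
    have : Tendsto (fun k => ‖w (φ k)‖) atTop (nhds ‖L‖) := hL.norm
    have h2 : Tendsto (fun _ : ℕ => (1:ℝ)) atTop (nhds ‖L‖) := by
      simpa only [hwn] using this
    exact tendsto_nhds_unique h2 tendsto_const_nhds
  rw [hL0, norm_zero] at hL1
  norm_num at hL1

lemma master_bound {T : H₀ →ₗ.[ℂ] H₁} {S : H₁ →ₗ.[ℂ] H₂}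
    (hTdense : Dense (T.domain : Set H₀)) (hSclosed : S.IsClosed)
    (hRanKer : ∀ (x : H₀) (y : H₁), (x, y) ∈ T.graph → (y, (0 : H₂)) ∈ S.graph)
    (hcpt : CompactnessProperty T S)
    {C : ℝ} (hC : ∀ u t, (u, (0:H₂)) ∈ S.graph → (u, t) ∈ T.adjoint.graph →
      u ∈ (harmonicSpace T S)ᗮ → ‖u‖ ≤ C * ‖t‖)
    {u : H₁} (hu : u ∈ pmapKer S) (huo : u ∈ (harmonicSpace T S)ᗮ) :
    ∀ b t, (b, t) ∈ T.adjoint.graph → ‖⟪u, b⟫‖ ≤ (C * ‖u‖) * ‖t‖ := by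
  haveI : CompleteSpace (pmapKer S : Submodule ℂ H₁) :=
    (ker_closed' hSclosed).completeSpace_coe
  haveI : FiniteDimensional ℂ (harmonicSpace T S) := harmonic_findim hTdense hSclosed hcpt
  intro b t hbt
  obtain ⟨a, ha, e, he, hbe⟩ := (pmapKer S).exists_add_mem_mem_orthogonal b
  have heT : (e, (0:H₀)) ∈ T.adjoint.graph := orth_ker_mem_adj hTdense hRanKer he
  have haT : (a, t) ∈ T.adjoint.graph := by
    have := T.adjoint.graph.sub_mem hbt heT
    rw [hbe] at this
    simpa using this
  obtain ⟨h, hh, c, hc, hac⟩ := (harmonicSpace T S).exists_add_mem_mem_orthogonal a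
  have hhT : (h, (0:H₀)) ∈ T.adjoint.graph := ((mem_harmonic_iff T S h).mp hh).2
  have hcT : (c, t) ∈ T.adjoint.graph := by
    have := T.adjoint.graph.sub_mem haT hhT
    rw [hac] at this
    simpa using this
  have hcS : (c, (0:H₂)) ∈ S.graph := by
    have haS : (a, (0:H₂)) ∈ S.graph := ha
    have hhS : (h, (0:H₂)) ∈ S.graph := ((mem_harmonic_iff T S h).mp hh).1
    have := S.graph.sub_mem haS hhS
    rw [hac] at this
    simpa using this
  have hcb : ‖c‖ ≤ C * ‖t‖ := hC c t hcS hcT hc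
  have key : ⟪u, b⟫ = ⟪u, c⟫ := by
    rw [hbe, hac, inner_add_right, inner_add_right,
      Submodule.inner_right_of_mem_orthogonal hu he,
      Submodule.inner_left_of_mem_orthogonal hh huo]
    ring
  rw [key]
  calc ‖⟪u, c⟫‖ ≤ ‖u‖ * ‖c‖ := norm_inner_le_norm u c
    _ ≤ ‖u‖ * (C * ‖t‖) := by
        apply mul_le_mul_of_nonneg_left hcb (norm_nonneg u)
    _ = (C * ‖u‖) * ‖t‖ := by ring

lemma exists_preimage {T : H₀ →ₗ.[ℂ] H₁} {S : H₁ →ₗ.[ℂ] H₂}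
    (hTclosed : T.IsClosed) (hTdense : Dense (T.domain : Set H₀)) (hSclosed : S.IsClosed)
    (hRanKer : ∀ (x : H₀) (y : H₁), (x, y) ∈ T.graph → (y, (0 : H₂)) ∈ S.graph)
    (hcpt : CompactnessProperty T S)
    {u : H₁} (hu : u ∈ pmapKer S) (huo : u ∈ (harmonicSpace T S)ᗮ) :
    ∃ v, (v, u) ∈ T.graph := by
  obtain ⟨C, hC0, hC⟩ := coercive hTdense hSclosed hcpt
  have mb := master_bound hTdense hSclosed hRanKer hcpt hC hu huo
  set A := T.adjoint.toFun with hA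
  set g : T.adjoint.domain →ₗ[ℂ] ℂ := (innerₛₗ ℂ u).comp T.adjoint.domain.subtype with hg
  have hker : LinearMap.ker A ≤ LinearMap.ker g := by
    intro b hb
    rw [LinearMap.mem_ker] at hb ⊢
    have hbg : ((b : H₁), (0:H₀)) ∈ T.adjoint.graph := by
      have h := T.adjoint.mem_graph b
      rwa [show T.adjoint b = 0 from hb] at h
    have h2 := mb (b : H₁) 0 hbg
    simp only [norm_zero, mul_zero] at h2
    have h0 : ‖(⟪u, (b:H₁)⟫ : ℂ)‖ = 0 := le_antisymm h2 (norm_nonneg _)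
    simpa [hg] using norm_eq_zero.mp h0
  set f₀ : LinearMap.range A →ₗ[ℂ] ℂ :=
    ((LinearMap.ker A).liftQ g hker).comp
      (A.quotKerEquivRange.symm : LinearMap.range A →ₗ[ℂ] (T.adjoint.domain ⧸ LinearMap.ker A))
    with hf₀
  have hf₀app : ∀ (b : T.adjoint.domain) (hy : A b ∈ LinearMap.range A),
      f₀ ⟨A b, hy⟩ = ⟪u, (b:H₁)⟫ := by
    intro b hy
    rw [hf₀]
    simp only [LinearMap.coe_comp, Function.comp_apply, LinearEquiv.coe_coe]
    rw [A.quotKerEquivRange_symm_apply_image b hy]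
    rw [Submodule.mkQ_apply, Submodule.liftQ_apply]
    rfl
  have hf₀b : ∀ y : LinearMap.range A, ‖f₀ y‖ ≤ (C * ‖u‖) * ‖y‖ := by
    rintro ⟨y, hy⟩
    obtain ⟨b, rfl⟩ := hy
    rw [hf₀app b (LinearMap.mem_range_self A b)]
    have hbg : ((b:H₁), A b) ∈ T.adjoint.graph := T.adjoint.mem_graph b
    exact mb _ _ hbg
  set f₁ : (LinearMap.range A : Submodule ℂ H₀) →L[ℂ] ℂ :=
    LinearMap.mkContinuous f₀ (C * ‖u‖) hf₀b with hf₁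
  obtain ⟨F, hF, -⟩ := exists_extension_norm_eq (LinearMap.range A) f₁
  set v : H₀ := (InnerProductSpace.toDual ℂ H₀).symm F with hv
  have hvf : ∀ b t, (b, t) ∈ T.adjoint.graph → ⟪v, t⟫ = ⟪u, b⟫ := by
    intro b t hbt
    rw [LinearPMap.mem_graph_iff] at hbt
    obtain ⟨b', hb', ht⟩ := hbt
    dsimp only at hb' ht
    have hmem : t ∈ LinearMap.range A := by
      rw [← ht]; exact LinearMap.mem_range_self A b'
    have h1 : (⟪v, t⟫ : ℂ) = F t := InnerProductSpace.toDual_symm_apply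
    have h2 : F t = f₁ ⟨t, hmem⟩ := hF ⟨t, hmem⟩
    have h3 : f₁ ⟨t, hmem⟩ = f₀ ⟨t, hmem⟩ := rfl
    have h4 : f₀ ⟨t, hmem⟩ = ⟪u, (b' : H₁)⟫ := by
      have heq : (⟨t, hmem⟩ : LinearMap.range A) = ⟨A b', LinearMap.mem_range_self A b'⟩ := by
        apply Subtype.ext; exact ht.symm
      rw [heq, hf₀app]
    rw [h1, h2, h3, h4, hb']
  -- transfer to WithLp 2 and use biorthogonality
  set e := WithLp.prodContinuousLinearEquiv 2 ℂ H₀ H₁ with he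
  set G : Submodule ℂ (WithLp 2 (H₀ × H₁)) :=
    T.graph.comap ((e : WithLp 2 (H₀ × H₁) →L[ℂ] H₀ × H₁) : WithLp 2 (H₀ × H₁) →ₗ[ℂ] H₀ × H₁)
    with hG
  have hGc : IsClosed (G : Set (WithLp 2 (H₀ × H₁))) := by
    have : (G : Set (WithLp 2 (H₀ × H₁))) = ⇑e ⁻¹' (T.graph : Set (H₀ × H₁)) := rfl
    rw [this]
    exact hTclosed.preimage e.continuous
  have hGG : Gᗮᗮ ≤ G := by
    rw [Submodule.orthogonal_orthogonal_eq_closure]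
    exact G.topologicalClosure_minimal le_rfl hGc

  set x₀ : WithLp 2 (H₀ × H₁) := (WithLp.equiv 2 (H₀ × H₁)).symm (v, u) with hx₀
  have hx₀mem : x₀ ∈ Gᗮᗮ := by
    rw [Submodule.mem_orthogonal]
    intro w hw
    have ha : ∀ x : T.domain,
        (⟪(x : H₀), w.fst⟫ : ℂ) + ⟪T x, w.snd⟫ = 0 := by
      intro x
      have hgx : (WithLp.equiv 2 (H₀ × H₁)).symm ((x : H₀), T x) ∈ G :=
        T.mem_graph x
      have h0 := (Submodule.mem_orthogonal G w).mp hw _ hgx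
      rw [WithLp.prod_inner_apply] at h0
      simpa [WithLp.equiv_symm_apply] using h0
    set a : H₀ := w.fst with haw
    set b2 : H₁ := w.snd with hbw
    have hb : ∀ x : T.domain, (⟪-a, (x : H₀)⟫ : ℂ) = ⟪b2, T x⟫ := by
      intro x
      have h' := ha x
      have h5 : (⟪T x, b2⟫ : ℂ) = -⟪(x : H₀), a⟫ := by linear_combination h'
      have h6 := congrArg (starRingEnd ℂ) h5
      rw [map_neg, inner_conj_symm, inner_conj_symm] at h6
      rw [inner_neg_left, h6]
    have hmem : b2 ∈ T.adjoint.domain :=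
      LinearPMap.mem_adjoint_domain_of_exists b2 ⟨-a, hb⟩
    have hTb : T.adjoint ⟨b2, hmem⟩ = -a := LinearPMap.adjoint_apply_eq hTdense ⟨b2, hmem⟩ hb
    have hbg : (b2, -a) ∈ T.adjoint.graph := by
      rw [LinearPMap.mem_graph_iff]
      exact ⟨⟨b2, hmem⟩, rfl, hTb⟩
    have h5 := hvf b2 (-a) hbg
    rw [inner_neg_right] at h5
    have h6 := congrArg (starRingEnd ℂ) h5
    rw [map_neg, inner_conj_symm, inner_conj_symm] at h6
    rw [WithLp.prod_inner_apply]
    have hf : (x₀.fst : H₀) = v := by rw [hx₀]; rfl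
    have hs : (x₀.snd : H₁) = u := by rw [hx₀]; rfl
    rw [WithLp.ofLp_fst, WithLp.ofLp_snd, WithLp.ofLp_fst, WithLp.ofLp_snd, hf, hs, ← haw, ← hbw]
    linear_combination -h6
  have hx₀G : x₀ ∈ G := hGG hx₀mem
  refine ⟨v, ?_⟩
  exact hx₀G

/-- If `T : H₀ → H₁`, `S : H₁ → H₂` are closed, densely defined operators with
`Ran T ⊆ Ker S` and the compactness property holds, then `Ker S` is the orthogonal direct sum
of `Ran T` and the harmonic space `ℋ = Ker S ∩ Ker T*`: `Ran T` is closed, `Ran T ⟂ ℋ`, and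
every `u ∈ Ker S` can be written `u = T v + h` with `v ∈ Dom T` and `h ∈ ℋ`.  In particular,
`Ran T` has finite codimension in `Ker S`. -/
theorem stmt3 (T : H₀ →ₗ.[ℂ] H₁) (S : H₁ →ₗ.[ℂ] H₂)
    (hTclosed : T.IsClosed) (hTdense : Dense (T.domain : Set H₀))
    (hSclosed : S.IsClosed) (hSdense : Dense (S.domain : Set H₁))
    (hRanKer : ∀ (x : H₀) (y : H₁), (x, y) ∈ T.graph → (y, (0 : H₂)) ∈ S.graph)
    (hcpt : CompactnessProperty T S) :
    IsClosed ((pmapRange T : Submodule ℂ H₁) : Set H₁) ∧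
    (∀ u ∈ pmapRange T, ∀ h ∈ harmonicSpace T S, @inner ℂ _ _ u h = 0) ∧
    (∀ u ∈ pmapKer S, ∃ (v : H₀) (h : H₁),
      h ∈ harmonicSpace T S ∧ (v, u - h) ∈ T.graph) ∧
    FiniteDimensional ℂ
      ((pmapKer S : Submodule ℂ H₁) ⧸ ((pmapRange T).comap (pmapKer S).subtype)) := by
  haveI hfin : FiniteDimensional ℂ (harmonicSpace T S) :=
    harmonic_findim hTdense hSclosed hcpt
  have horth : ∀ u ∈ pmapRange T, ∀ h ∈ harmonicSpace T S, (⟪u, h⟫ : ℂ) = 0 := by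
    intro u hu h hh
    obtain ⟨x, hx⟩ := (mem_pmapRange_iff T u).mp hu
    rw [LinearPMap.mem_graph_iff] at hx
    obtain ⟨x', hx', hTx⟩ := hx
    dsimp only at hx' hTx
    have hhT : (h, (0:H₀)) ∈ T.adjoint.graph := ((mem_harmonic_iff T S h).mp hh).2
    rw [LinearPMap.mem_graph_iff] at hhT
    obtain ⟨h', hh', hTh⟩ := hhT
    dsimp only at hh' hTh
    have := LinearPMap.adjoint_isFormalAdjoint hTdense h' x'
    rw [hTh, hh', inner_zero_left] at this
    rw [← hTx, ← inner_conj_symm, ← this, map_zero]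
  have hRR : pmapRange T = pmapKer S ⊓ (harmonicSpace T S)ᗮ := by
    ext u
    rw [Submodule.mem_inf]
    constructor
    · intro hu
      obtain ⟨v, hv⟩ := (mem_pmapRange_iff T u).mp hu
      refine ⟨hRanKer v u hv, ?_⟩
      rw [Submodule.mem_orthogonal]
      intro h hh
      rw [← inner_conj_symm, horth u hu h hh, map_zero]
    · rintro ⟨h1, h2⟩
      obtain ⟨v, hv⟩ := exists_preimage hTclosed hTdense hSclosed hRanKer hcpt h1 h2
      exact (mem_pmapRange_iff T u).mpr ⟨v, hv⟩
  have hdecomp : ∀ u ∈ pmapKer S, ∃ (v : H₀) (h : H₁),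
      h ∈ harmonicSpace T S ∧ (v, u - h) ∈ T.graph := by
    intro u hu
    obtain ⟨h, hh, c, hc, huc⟩ := (harmonicSpace T S).exists_add_mem_mem_orthogonal u
    have hcS : c ∈ pmapKer S := by
      have h1 : (u, (0:H₂)) ∈ S.graph := hu
      have h2 : (h, (0:H₂)) ∈ S.graph := ((mem_harmonic_iff T S h).mp hh).1
      have h3 := S.graph.sub_mem h1 h2
      rw [huc] at h3
      rw [mem_pmapKer_iff]
      have he : ((h + c, (0:H₂)) - (h, 0) : H₁ × H₂) = (c, (0:H₂)) := by
        rw [Prod.mk_sub_mk]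
        simp
      rwa [he] at h3
    obtain ⟨v, hv⟩ := exists_preimage hTclosed hTdense hSclosed hRanKer hcpt hcS hc
    refine ⟨v, h, hh, ?_⟩
    have : u - h = c := by rw [huc]; abel
    rwa [this]
  refine ⟨?_, horth, hdecomp, ?_⟩
  · rw [hRR]
    exact (ker_closed' hSclosed).inter (harmonicSpace T S).isClosed_orthogonal
  · have hle : harmonicSpace T S ≤ pmapKer S := inf_le_left
    set N := (pmapRange T).comap (pmapKer S).subtype with hN
    set ψ : harmonicSpace T S →ₗ[ℂ] ((pmapKer S : Submodule ℂ H₁) ⧸ N) :=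
      N.mkQ.comp (Submodule.inclusion hle) with hψ
    have hsurj : Function.Surjective ψ := by
      intro q
      obtain ⟨⟨u, hu⟩, rfl⟩ := Submodule.Quotient.mk_surjective N q
      obtain ⟨v, h, hh, hv⟩ := hdecomp u hu
      refine ⟨⟨h, hh⟩, ?_⟩
      have h1 : ψ ⟨h, hh⟩ = Submodule.Quotient.mk (Submodule.inclusion hle ⟨h, hh⟩) := rfl
      rw [h1, Submodule.Quotient.eq]
      rw [Submodule.mem_comap]
      have hmem : u - h ∈ pmapRange T := (mem_pmapRange_iff T _).mpr ⟨v, hv⟩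
      have h2 : (pmapKer S).subtype (Submodule.inclusion hle ⟨h, hh⟩ - ⟨u, hu⟩) = -(u - h) := by
        simp only [map_sub, Submodule.coe_subtype, Submodule.coe_inclusion]
        abel
      rw [h2]
      exact (pmapRange T).neg_mem hmem
    exact Module.Finite.of_surjective ψ hsurj
end

section
/- Let H₀, H₁, H₂ be complex Hilbert spaces and let T : H₀ → H₁ and S : H₁ → H₂ be closed, densely defined linear operators with Ran T ⊆ Ker S. Assume the compactness property: every sequence (u_k) in Dom S ∩ Dom T* with sup_k ‖u_k‖ < ∞, ‖S u_k‖ → 0 and ‖T* u_k‖ → 0 has a subsequence converging in H₁. Define the Laplacian Δ with domain Dom Δ = {u ∈ Dom S ∩ Dom T* : Su ∈ Dom S*, T*u ∈ Dom T} by Δu = S*(Su) + T(T*u). Then Ker Δ equals the harmonic space ℋ = Ker S ∩ Ker T*, and Ran Δ equals the orthogonal complement of ℋ in H₁; in particular Δ has closed range. -/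
set_option linter.unusedSectionVars false
set_option maxHeartbeats 1000000
set_option synthInstance.maxHeartbeats 1000000


open Filter

variable {H₀ H₁ H₂ : Type*}
  [NormedAddCommGroup H₀] [InnerProductSpace ℂ H₀] [CompleteSpace H₀]
  [NormedAddCommGroup H₁] [InnerProductSpace ℂ H₁] [CompleteSpace H₁]
  [NormedAddCommGroup H₂] [InnerProductSpace ℂ H₂] [CompleteSpace H₂]

/-- The graph of the Laplacian `Δ = S* S + T T*`:  `(u, w) ∈ lapGraph T S` iff
`u ∈ Dom S ∩ Dom T*`, `S u ∈ Dom S*`, `T* u ∈ Dom T` and `w = S* (S u) + T (T* u)`. -/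
noncomputable def lapGraph (T : H₀ →ₗ.[ℂ] H₁) (S : H₁ →ₗ.[ℂ] H₂) : Set (H₁ × H₁) :=
  {p : H₁ × H₁ | ∃ (a : H₂) (b : H₀) (c d : H₁),
    (p.1, a) ∈ S.graph ∧ (a, c) ∈ S.adjoint.graph ∧
    (p.1, b) ∈ T.adjoint.graph ∧ (b, d) ∈ T.graph ∧ p.2 = c + d}


section Helpers
variable {E F : Type*}
  [NormedAddCommGroup E] [InnerProductSpace ℂ E] [CompleteSpace E]
  [NormedAddCommGroup F] [InnerProductSpace ℂ F] [CompleteSpace F]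

local notation "⟪" x ", " y "⟫" => @inner ℂ _ _ x y

lemma mem_adjoint_graph_iff' (A : E →ₗ.[ℂ] F) (hA : Dense (A.domain : Set E)) {y : F} {z : E} :
    (y, z) ∈ A.adjoint.graph ↔ ∀ x : A.domain, ⟪z, (x : E)⟫ = ⟪y, A x⟫ := by
  constructor
  · intro h x
    rw [LinearPMap.mem_graph_iff] at h
    obtain ⟨v, hv1, hv2⟩ := h
    have := LinearPMap.adjoint_isFormalAdjoint hA v x
    simp only at hv1 hv2
    rw [hv2, hv1] at this
    exact this
  · intro h
    have hy : y ∈ A.adjoint.domain := LinearPMap.mem_adjoint_domain_of_exists y ⟨z, h⟩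
    have : A.adjoint ⟨y, hy⟩ = z := LinearPMap.adjoint_apply_eq hA ⟨y, hy⟩ h
    rw [LinearPMap.mem_graph_iff]
    exact ⟨⟨y, hy⟩, rfl, this⟩


lemma adjoint_graph_isClosed (A : E →ₗ.[ℂ] F) (hA : Dense (A.domain : Set E)) :
    IsClosed (A.adjoint.graph : Set (F × E)) := by
  have hset : (A.adjoint.graph : Set (F × E)) =
      ⋂ x : A.domain, {p : F × E | ⟪p.2, (x : E)⟫ = ⟪p.1, A x⟫} := by
    ext ⟨y, z⟩
    simp only [Set.mem_iInter, Set.mem_setOf_eq, SetLike.mem_coe]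
    exact mem_adjoint_graph_iff' A hA
  rw [hset]
  exact isClosed_iInter fun x => isClosed_eq (continuous_snd.inner continuous_const) (continuous_fst.inner continuous_const)

lemma mem_graph_of_inner (A : E →ₗ.[ℂ] F) (hAc : A.IsClosed) (hA : Dense (A.domain : Set E))
    {b : E} {d : F}
    (h : ∀ (y : F) (z : E), (y, z) ∈ A.adjoint.graph → ⟪y, d⟫ = ⟪z, b⟫) :
    (b, d) ∈ A.graph := by
  classical
  let L : WithLp 2 (F × E) →ₗ[ℂ] E × F :=
    { toFun := fun p => (-p.snd, p.fst)
      map_add' := fun x y => by ext <;> simp <;> abel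
      map_smul' := fun c x => by ext <;> simp }
  have hLc : Continuous L := by
    have h1 : Continuous fun q : F × E => ((-q.2, q.1) : E × F) := by fun_prop
    exact h1.comp (WithLp.prodContinuousLinearEquiv 2 ℂ F E).continuous
  let K : Submodule ℂ (WithLp 2 (F × E)) := A.graph.comap L
  have hKc : IsClosed (K : Set (WithLp 2 (F × E))) := hAc.preimage hLc
  have hKorth : ∀ v : WithLp 2 (F × E), v ∈ Kᗮ ↔ (v.fst, v.snd) ∈ A.adjoint.graph := by
    intro v
    rw [Submodule.mem_orthogonal, mem_adjoint_graph_iff' A hA]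
    constructor
    · intro hv x
      have hp : ((WithLp.equiv 2 (F × E)).symm (A x, -(x : E))) ∈ K := by
        show (-(-(x : E)), A x) ∈ A.graph
        rw [neg_neg]
        exact A.mem_graph x
      have h2 := hv _ hp
      simp only [WithLp.prod_inner_apply, WithLp.ofLp_fst, WithLp.ofLp_snd] at h2
      have h3 : ⟪A x, v.fst⟫ = ⟪(x : E), v.snd⟫ := by
        have : ((WithLp.equiv 2 (F × E)).symm (A x, -(x : E))).fst = A x := rfl
        rw [this] at h2
        have h4 : ((WithLp.equiv 2 (F × E)).symm (A x, -(x : E))).snd = -(x : E) := rfl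
        rw [h4, inner_neg_left] at h2
        linear_combination h2
      calc ⟪v.snd, (x : E)⟫ = (starRingEnd ℂ) ⟪(x : E), v.snd⟫ := (inner_conj_symm _ _).symm
        _ = (starRingEnd ℂ) ⟪A x, v.fst⟫ := by rw [h3]
        _ = ⟪v.fst, A x⟫ := inner_conj_symm _ _
    · intro hg p hp
      have hp' : (-p.snd, p.fst) ∈ A.graph := hp
      rw [LinearPMap.mem_graph_iff] at hp'
      obtain ⟨x, hx1, hx2⟩ := hp'
      simp only at hx1 hx2
      simp only [WithLp.prod_inner_apply, WithLp.ofLp_fst, WithLp.ofLp_snd]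
      have h5 : p.snd = -(x : E) := by rw [hx1, neg_neg]
      have h6 := hg x
      rw [← hx2, h5, inner_neg_left]
      have h7 : ⟪A x, v.fst⟫ = ⟪(x : E), v.snd⟫ := by
        calc ⟪A x, v.fst⟫ = (starRingEnd ℂ) ⟪v.fst, A x⟫ := (inner_conj_symm _ _).symm
          _ = (starRingEnd ℂ) ⟪v.snd, (x : E)⟫ := by rw [h6]
          _ = ⟪(x : E), v.snd⟫ := inner_conj_symm _ _
      linear_combination h7
  haveI : CompleteSpace K := hKc.completeSpace_coe
  have hKK : Kᗮᗮ = K := Submodule.orthogonal_orthogonal K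
  have hq : ((WithLp.equiv 2 (F × E)).symm (d, -b)) ∈ Kᗮᗮ := by
    rw [Submodule.mem_orthogonal]
    intro v hv
    rw [hKorth v] at hv
    have h8 := h v.fst v.snd hv
    simp only [WithLp.prod_inner_apply, WithLp.ofLp_fst, WithLp.ofLp_snd]
    have h9 : ((WithLp.equiv 2 (F × E)).symm (d, -b)).fst = d := rfl
    have h10 : ((WithLp.equiv 2 (F × E)).symm (d, -b)).snd = -b := rfl
    rw [h9, h10, inner_neg_right]
    linear_combination h8
  rw [hKK] at hq
  have : (-(-b), d) ∈ A.graph := hq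
  rwa [neg_neg] at this
noncomputable def kerSM (A : E →ₗ.[ℂ] F) : Submodule ℂ E :=
  A.graph.comap ((LinearMap.id : E →ₗ[ℂ] E).prod (0 : E →ₗ[ℂ] F))

lemma mem_kerSM {A : E →ₗ.[ℂ] F} {u : E} : u ∈ kerSM A ↔ (u, (0 : F)) ∈ A.graph := Iff.rfl

lemma kerSM_isClosed {A : E →ₗ.[ℂ] F} (hAc : A.IsClosed) : IsClosed ((kerSM A : Set E)) := by
  have h : (kerSM A : Set E) = (fun u => (u, (0 : F))) ⁻¹' (A.graph : Set (E × F)) := rfl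
  rw [h]
  exact hAc.preimage (continuous_id.prodMk continuous_const)

noncomputable def ranSM (A : E →ₗ.[ℂ] F) : Submodule ℂ F :=
  A.graph.map (LinearMap.snd ℂ E F)

lemma kerSM_adjoint_eq_orth (A : E →ₗ.[ℂ] F) (hA : Dense (A.domain : Set E)) :
    kerSM A.adjoint = (ranSM A)ᗮ := by
  ext y
  rw [mem_kerSM, mem_adjoint_graph_iff' A hA, Submodule.mem_orthogonal]
  constructor
  · intro h u hu
    obtain ⟨p, hp, hp2⟩ := hu
    rw [SetLike.mem_coe, LinearPMap.mem_graph_iff] at hp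
    obtain ⟨x, hx1, hx2⟩ := hp
    have := h x
    rw [inner_zero_left] at this
    have h2 : u = A x := by rw [← hp2]; exact hx2.symm
    rw [h2]
    calc ⟪A x, y⟫ = (starRingEnd ℂ) ⟪y, A x⟫ := (inner_conj_symm _ _).symm
      _ = (starRingEnd ℂ) 0 := by rw [← this]
      _ = 0 := by simp
  · intro h x
    have : A x ∈ ranSM A := ⟨((x : E), A x), A.mem_graph x, rfl⟩
    have h2 := h _ this
    rw [inner_zero_left]
    calc (0 : ℂ) = (starRingEnd ℂ) 0 := by simp
      _ = (starRingEnd ℂ) ⟪A x, y⟫ := by rw [h2]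
      _ = ⟪y, A x⟫ := inner_conj_symm _ _

lemma cauchySeq_of_bound {u : ℕ → E} {p : ℕ → F} {K : ℝ} (hK : 0 < K)
    (h : ∀ j k, ‖u j - u k‖ ≤ K * ‖p j - p k‖) (hp : CauchySeq p) : CauchySeq u := by
  rw [Metric.cauchySeq_iff] at hp ⊢
  intro ε hε
  obtain ⟨N, hN⟩ := hp (ε / K) (by positivity)
  refine ⟨N, fun m hm n hn => ?_⟩
  have h1 := h m n
  have h2 := hN m hm n hn
  rw [dist_eq_norm] at h2 ⊢
  calc ‖u m - u n‖ ≤ K * ‖p m - p n‖ := h1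
    _ < K * (ε / K) := by exact (mul_lt_mul_iff_right₀ hK).mpr h2
    _ = ε := by field_simp

lemma norm_fst_le_withLp (x : WithLp 2 (E × F)) : ‖x.fst‖ ≤ ‖x‖ := by
  have h := WithLp.prod_norm_sq_eq_of_L2 x
  nlinarith [norm_nonneg x, norm_nonneg x.fst, norm_nonneg x.snd]

lemma norm_snd_le_withLp (x : WithLp 2 (E × F)) : ‖x.snd‖ ≤ ‖x‖ := by
  have h := WithLp.prod_norm_sq_eq_of_L2 x
  nlinarith [norm_nonneg x, norm_nonneg x.fst, norm_nonneg x.snd]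

end Helpers

local notation "⟪" x ", " y "⟫" => @inner ℂ _ _ x y

lemma harmonicSpace_eq (T : H₀ →ₗ.[ℂ] H₁) (S : H₁ →ₗ.[ℂ] H₂) :
    harmonicSpace T S = kerSM S ⊓ kerSM T.adjoint := rfl

lemma mem_harmonicSpace_iff {T : H₀ →ₗ.[ℂ] H₁} {S : H₁ →ₗ.[ℂ] H₂} {u : H₁} :
    u ∈ harmonicSpace T S ↔ (u, (0 : H₂)) ∈ S.graph ∧ (u, (0 : H₀)) ∈ T.adjoint.graph :=
  Iff.rfl

lemma basic_estimate (T : H₀ →ₗ.[ℂ] H₁) (S : H₁ →ₗ.[ℂ] H₂)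
    (hTdense : Dense (T.domain : Set H₀)) (hSclosed : S.IsClosed)
    (hcpt : CompactnessProperty T S) :
    ∃ C : ℝ, 0 < C ∧ ∀ u s t, (u, s) ∈ S.graph → (u, t) ∈ T.adjoint.graph →
      (∀ h ∈ harmonicSpace T S, ⟪u, h⟫ = 0) → ‖u‖ ≤ C * (‖s‖ + ‖t‖) := by
  by_contra hcon
  push_neg at hcon
  have hseq : ∀ k : ℕ, ∃ u s t, (u, s) ∈ S.graph ∧ (u, t) ∈ T.adjoint.graph ∧
      (∀ h ∈ harmonicSpace T S, ⟪u, h⟫ = 0) ∧ ((k : ℝ) + 1) * (‖s‖ + ‖t‖) < ‖u‖ := by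
    intro k
    obtain ⟨u, s, t, h1, h2, h3, h4⟩ := hcon ((k : ℝ) + 1) (by positivity)
    exact ⟨u, s, t, h1, h2, h3, h4⟩
  choose u s t hS hT ho hlt using hseq
  have hup : ∀ k, 0 < ‖u k‖ := by
    intro k
    have h0 : (0 : ℝ) ≤ ((k : ℝ) + 1) * (‖s k‖ + ‖t k‖) := by positivity
    linarith [hlt k]
  set c : ℕ → ℝ := fun k => ‖u k‖⁻¹ with hc
  set v : ℕ → H₁ := fun k => ((c k : ℝ) : ℂ) • u k with hv
  set s' : ℕ → H₂ := fun k => ((c k : ℝ) : ℂ) • s k with hs'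
  set t' : ℕ → H₀ := fun k => ((c k : ℝ) : ℂ) • t k with ht'
  have hnc : ∀ k, ‖(((c k : ℝ)) : ℂ)‖ = ‖u k‖⁻¹ := by
    intro k
    rw [Complex.norm_real, Real.norm_eq_abs, hc, abs_of_nonneg (inv_nonneg.mpr (hup k).le)]
  have hv1 : ∀ k, ‖v k‖ = 1 := by
    intro k
    rw [hv]
    simp only [norm_smul, hnc k]
    exact inv_mul_cancel₀ (hup k).ne'
  have hmemS : ∀ k, (v k, s' k) ∈ S.graph := fun k => S.graph.smul_mem _ (hS k)
  have hmemT : ∀ k, (v k, t' k) ∈ T.adjoint.graph := fun k => T.adjoint.graph.smul_mem _ (hT k)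
  have hov : ∀ k, ∀ h ∈ harmonicSpace T S, ⟪v k, h⟫ = 0 := by
    intro k h hh
    rw [hv]
    simp only [inner_smul_left, ho k h hh, mul_zero]
  have hbound : ∀ k, ‖s' k‖ + ‖t' k‖ ≤ 1 / ((k : ℝ) + 1) := by
    intro k
    have hk1 : (0 : ℝ) < (k : ℝ) + 1 := by positivity
    have h1 : ‖s' k‖ + ‖t' k‖ = ‖u k‖⁻¹ * (‖s k‖ + ‖t k‖) := by
      rw [hs', ht']
      simp only [norm_smul, hnc k]
      ring
    rw [h1]
    have h2 : ‖s k‖ + ‖t k‖ < ‖u k‖ / ((k : ℝ) + 1) := (lt_div_iff₀' hk1).mpr (hlt k)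
    have h3 : ‖u k‖⁻¹ * (‖s k‖ + ‖t k‖) ≤ ‖u k‖⁻¹ * (‖u k‖ / ((k : ℝ) + 1)) :=
      mul_le_mul_of_nonneg_left h2.le (inv_nonneg.mpr (hup k).le)
    refine h3.trans (le_of_eq ?_)
    rw [div_eq_mul_inv, ← mul_assoc, inv_mul_cancel₀ (hup k).ne', one_mul, one_div]
  have hs0 : Tendsto (fun k => ‖s' k‖) atTop (nhds 0) :=
    squeeze_zero (fun k => norm_nonneg _)
      (fun k => le_trans (le_add_of_nonneg_right (norm_nonneg _)) (hbound k))
      tendsto_one_div_add_atTop_nhds_zero_nat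
  have ht0 : Tendsto (fun k => ‖t' k‖) atTop (nhds 0) :=
    squeeze_zero (fun k => norm_nonneg _)
      (fun k => le_trans (le_add_of_nonneg_left (norm_nonneg _)) (hbound k))
      tendsto_one_div_add_atTop_nhds_zero_nat
  obtain ⟨φ, L, hφ, hL⟩ := hcpt v s' t' hmemS hmemT ⟨1, fun k => (hv1 k).le⟩ hs0 ht0
  have hφtop : Tendsto φ atTop atTop := hφ.tendsto_atTop
  have hLnorm : ‖L‖ = 1 := by
    refine tendsto_nhds_unique hL.norm ?_
    have : (fun k => ‖(v ∘ φ) k‖) = fun _ => (1 : ℝ) := funext fun k => hv1 (φ k)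
    rw [this]
    exact tendsto_const_nhds
  have hs'φ : Tendsto (fun k => s' (φ k)) atTop (nhds 0) :=
    tendsto_zero_iff_norm_tendsto_zero.mpr (hs0.comp hφtop)
  have ht'φ : Tendsto (fun k => t' (φ k)) atTop (nhds 0) :=
    tendsto_zero_iff_norm_tendsto_zero.mpr (ht0.comp hφtop)
  have hLS : (L, (0 : H₂)) ∈ S.graph :=
    IsClosed.mem_of_tendsto hSclosed (hL.prodMk_nhds hs'φ)
      (Filter.Eventually.of_forall fun k => hmemS (φ k))
  have hLT : (L, (0 : H₀)) ∈ T.adjoint.graph :=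
    IsClosed.mem_of_tendsto (adjoint_graph_isClosed T hTdense) (hL.prodMk_nhds ht'φ)
      (Filter.Eventually.of_forall fun k => hmemT (φ k))
  have hLH : L ∈ harmonicSpace T S := mem_harmonicSpace_iff.mpr ⟨hLS, hLT⟩
  have hLL : ⟪L, L⟫ = 0 := by
    refine tendsto_nhds_unique (hL.inner tendsto_const_nhds) ?_
    have : (fun k => ⟪(v ∘ φ) k, L⟫) = fun _ => (0 : ℂ) :=
      funext fun k => hov (φ k) L hLH
    rw [this]
    exact tendsto_const_nhds
  rw [inner_self_eq_zero] at hLL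
  rw [hLL, norm_zero] at hLnorm
  norm_num at hLnorm


/-- The kernel of the Laplacian `Δ = S*S + TT*` (with its natural domain)
equals the harmonic space `ℋ = Ker S ∩ Ker T*`, and its range equals the orthogonal
complement of `ℋ` in `H₁`; in particular `Δ` has closed range. -/
theorem stmt5 (T : H₀ →ₗ.[ℂ] H₁) (S : H₁ →ₗ.[ℂ] H₂)
    (hTclosed : T.IsClosed) (hTdense : Dense (T.domain : Set H₀))
    (hSclosed : S.IsClosed) (hSdense : Dense (S.domain : Set H₁))
    (hRanKer : ∀ (x : H₀) (y : H₁), (x, y) ∈ T.graph → (y, (0 : H₂)) ∈ S.graph)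
    (hcpt : CompactnessProperty T S) :
    {u : H₁ | (u, (0 : H₁)) ∈ lapGraph T S} = (harmonicSpace T S : Set H₁) ∧
    {w : H₁ | ∃ u : H₁, (u, w) ∈ lapGraph T S} =
      {w : H₁ | ∀ h ∈ harmonicSpace T S, @inner ℂ _ _ w h = 0} ∧
    IsClosed {w : H₁ | ∃ u : H₁, (u, w) ∈ lapGraph T S} := by
  classical
  have hTadjC : IsClosed (T.adjoint.graph : Set (H₁ × H₀)) := adjoint_graph_isClosed T hTdense
  have hMclosed : IsClosed ((kerSM S : Set H₁)) := kerSM_isClosed hSclosed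
  have hNclosed : IsClosed ((kerSM T.adjoint : Set H₁)) := kerSM_isClosed hTadjC
  have hHclosed : IsClosed ((harmonicSpace T S : Set H₁)) := by
    rw [harmonicSpace_eq, Submodule.coe_inf]
    exact hMclosed.inter hNclosed
  haveI : CompleteSpace (harmonicSpace T S) := hHclosed.completeSpace_coe
  haveI : CompleteSpace (kerSM S) := hMclosed.completeSpace_coe
  haveI : CompleteSpace (kerSM T.adjoint) := hNclosed.completeSpace_coe
  have hRanK : ranSM T ≤ kerSM S := by
    rintro y hy
    obtain ⟨x, hx, rfl⟩ := Submodule.mem_map.mp hy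
    exact mem_kerSM.mpr (hRanKer x.1 x.2 hx)
  have hNorth : (kerSM T.adjoint)ᗮ ≤ kerSM S := by
    rw [kerSM_adjoint_eq_orth T hTdense]
    have h1 : (ranSM T)ᗮᗮ = (ranSM T).topologicalClosure :=
      Submodule.orthogonal_orthogonal_eq_closure (ranSM T)
    rw [h1]
    exact (ranSM T).topologicalClosure_minimal hRanK hMclosed
  have hMorth : (kerSM S)ᗮ ≤ kerSM T.adjoint := by
    rw [kerSM_adjoint_eq_orth T hTdense]
    exact Submodule.orthogonal_le hRanK
  obtain ⟨C, hC0, hest⟩ := basic_estimate T S hTdense hSclosed hcpt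
  -- Part 1 : kernel equals harmonic space
  have part1 : {u : H₁ | (u, (0 : H₁)) ∈ lapGraph T S} = (harmonicSpace T S : Set H₁) := by
    ext u
    simp only [Set.mem_setOf_eq, SetLike.mem_coe, lapGraph]
    constructor
    · rintro ⟨a, b, c, d, hua, hac, hub, hbd, hcd⟩
      obtain ⟨x, hx1, hx2⟩ := S.mem_graph_iff.mp hua
      simp only at hx1 hx2 hcd
      have hca : ⟪c, u⟫ = ⟪a, a⟫ := by
        have h := (mem_adjoint_graph_iff' S hSdense).mp hac x
        rw [hx1, hx2] at h
        exact h
      obtain ⟨yw, hy1, hy2⟩ := T.mem_graph_iff.mp hbd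
      simp only at hy1 hy2
      have hdb : ⟪b, b⟫ = ⟪u, d⟫ := by
        have h := (mem_adjoint_graph_iff' T hTdense).mp hub yw
        rw [hy1, hy2] at h
        exact h
      have h0 : ⟪u, c + d⟫ = 0 := by rw [← hcd, inner_zero_right]
      have e1 : ⟪u, c⟫ = ⟪a, a⟫ := by
        rw [← inner_conj_symm, hca, inner_self_conj]
      have hsum0 : ⟪a, a⟫ + ⟪b, b⟫ = 0 := by
        rw [inner_add_right, e1, ← hdb] at h0
        exact h0
      rw [inner_self_eq_norm_sq_to_K (𝕜 := ℂ) a, inner_self_eq_norm_sq_to_K (𝕜 := ℂ) b] at hsum0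
      have hre : (‖a‖ : ℝ) ^ 2 + (‖b‖ : ℝ) ^ 2 = 0 := by
        rw [← RCLike.ofReal_eq_zero (K := ℂ), RCLike.ofReal_add, RCLike.ofReal_pow,
          RCLike.ofReal_pow]
        exact hsum0
      have ha : a = 0 := by
        have : ‖a‖ = 0 := by nlinarith [norm_nonneg a, norm_nonneg b]
        exact norm_eq_zero.mp this
      have hb : b = 0 := by
        have : ‖b‖ = 0 := by nlinarith [norm_nonneg a, norm_nonneg b]
        exact norm_eq_zero.mp this
      rw [ha] at hua
      rw [hb] at hub
      exact mem_harmonicSpace_iff.mpr ⟨hua, hub⟩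
    · intro hu
      obtain ⟨h1, h2⟩ := mem_harmonicSpace_iff.mp hu
      exact ⟨0, 0, 0, 0, h1, S.adjoint.graph.zero_mem, h2, T.graph.zero_mem, by simp⟩
  -- Part 2 : range equals orthogonal complement of the harmonic space
  have part2 : {w : H₁ | ∃ u : H₁, (u, w) ∈ lapGraph T S} =
      {w : H₁ | ∀ h ∈ harmonicSpace T S, ⟪w, h⟫ = 0} := by
    ext w
    simp only [Set.mem_setOf_eq, lapGraph]
    constructor
    · rintro ⟨u, a, b, c, d, hua, hac, hub, hbd, hcd⟩ h hh
      obtain ⟨hh1, hh2⟩ := mem_harmonicSpace_iff.mp hh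
      obtain ⟨xh, hxh1, hxh2⟩ := S.mem_graph_iff.mp hh1
      simp only at hxh1 hxh2
      have e1 : ⟪c, h⟫ = 0 := by
        have h' := (mem_adjoint_graph_iff' S hSdense).mp hac xh
        rw [hxh1, hxh2, inner_zero_right] at h'
        exact h'
      obtain ⟨yw, hy1, hy2⟩ := T.mem_graph_iff.mp hbd
      simp only at hy1 hy2
      have e2 : ⟪d, h⟫ = 0 := by
        have h' := (mem_adjoint_graph_iff' T hTdense).mp hh2 yw
        rw [hy1, hy2, inner_zero_left] at h'
        exact inner_eq_zero_symm.mp h'.symm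
      rw [hcd, inner_add_left]
      have e1' : ⟪c, h⟫ = 0 := e1
      rw [e1', e2, add_zero]
    · intro hw
      set Wit : H₁ → WithLp 2 (H₂ × H₀) → Prop := fun u p =>
        (u, p.fst) ∈ S.graph ∧ (u, p.snd) ∈ T.adjoint.graph ∧
          ∀ h ∈ harmonicSpace T S, ⟪u, h⟫ = 0 with hWitdef
      have hWadd : ∀ {u u' : H₁} {p p' : WithLp 2 (H₂ × H₀)},
          Wit u p → Wit u' p' → Wit (u + u') (p + p') := by
        rintro u u' p p' ⟨h1, h2, h3⟩ ⟨h1', h2', h3'⟩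
        refine ⟨S.graph.add_mem h1 h1', T.adjoint.graph.add_mem h2 h2', fun h hh => ?_⟩
        rw [inner_add_left, h3 h hh, h3' h hh, add_zero]
      have hWsmul : ∀ (cc : ℂ) {u : H₁} {p : WithLp 2 (H₂ × H₀)},
          Wit u p → Wit (cc • u) (cc • p) := by
        rintro cc u p ⟨h1, h2, h3⟩
        refine ⟨S.graph.smul_mem cc h1, T.adjoint.graph.smul_mem cc h2, fun h hh => ?_⟩
        rw [inner_smul_left, h3 h hh, mul_zero]
      have huniq : ∀ {u u' : H₁} {p : WithLp 2 (H₂ × H₀)}, Wit u p → Wit u' p → u = u' := by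
        rintro u u' p ⟨h1, h2, h3⟩ ⟨h1', h2', h3'⟩
        have hd : ‖u - u'‖ ≤ C * (‖(0 : H₂)‖ + ‖(0 : H₀)‖) := by
          apply hest (u - u') 0 0
          · have h9 := S.graph.sub_mem h1 h1'
            rwa [Prod.mk_sub_mk, sub_self] at h9
          · have h9 := T.adjoint.graph.sub_mem h2 h2'
            rwa [Prod.mk_sub_mk, sub_self] at h9
          · intro h hh
            rw [inner_sub_left, h3 h hh, h3' h hh, sub_zero]
        simp only [norm_zero, add_zero, mul_zero] at hd
        have := norm_le_zero_iff.mp hd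
        exact sub_eq_zero.mp this
      set R : Submodule ℂ (WithLp 2 (H₂ × H₀)) :=
        { carrier := {p | ∃ u, Wit u p}
          add_mem' := fun ⟨u, hu⟩ ⟨u', hu'⟩ => ⟨u + u', hWadd hu hu'⟩
          zero_mem' := ⟨0, S.graph.zero_mem, T.adjoint.graph.zero_mem, fun h _ => inner_zero_left h⟩
          smul_mem' := fun cc p ⟨u, hu⟩ => ⟨cc • u, hWsmul cc hu⟩ } with hRdef
      have hfstc : Continuous (fun x : WithLp 2 (H₂ × H₀) => x.fst) :=
        continuous_fst.comp (WithLp.prodContinuousLinearEquiv 2 ℂ H₂ H₀).continuous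
      have hsndc : Continuous (fun x : WithLp 2 (H₂ × H₀) => x.snd) :=
        continuous_snd.comp (WithLp.prodContinuousLinearEquiv 2 ℂ H₂ H₀).continuous
      have hRclosed : IsClosed (R : Set (WithLp 2 (H₂ × H₀))) := by
        apply IsSeqClosed.isClosed
        intro pk p hpk hplim
        choose uk hk using hpk
        have hdiff : ∀ j k, ‖uk j - uk k‖ ≤ (2 * C) * ‖pk j - pk k‖ := by
          intro j k
          have h1 : ‖uk j - uk k‖ ≤ C * (‖(pk j - pk k).fst‖ + ‖(pk j - pk k).snd‖) := by
            apply hest _ _ _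
            · exact S.graph.sub_mem (hk j).1 (hk k).1
            · exact T.adjoint.graph.sub_mem (hk j).2.1 (hk k).2.1
            · intro h hh
              rw [inner_sub_left, (hk j).2.2 h hh, (hk k).2.2 h hh, sub_zero]
          have h2 : ‖(pk j - pk k).fst‖ ≤ ‖pk j - pk k‖ := norm_fst_le_withLp _
          have h3 : ‖(pk j - pk k).snd‖ ≤ ‖pk j - pk k‖ := norm_snd_le_withLp _
          nlinarith
        have hcau : CauchySeq uk :=
          cauchySeq_of_bound (by positivity) hdiff hplim.cauchySeq
        obtain ⟨u, hulim⟩ := cauchySeq_tendsto_of_complete hcau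
        refine ⟨u, ?_, ?_, ?_⟩
        · exact IsClosed.mem_of_tendsto hSclosed
            (hulim.prodMk_nhds ((hfstc.tendsto p).comp hplim))
            (Filter.Eventually.of_forall fun k => (hk k).1)
        · exact IsClosed.mem_of_tendsto hTadjC
            (hulim.prodMk_nhds ((hsndc.tendsto p).comp hplim))
            (Filter.Eventually.of_forall fun k => (hk k).2.1)
        · intro h hh
          refine tendsto_nhds_unique (hulim.inner tendsto_const_nhds) ?_
          have he : (fun k => ⟪uk k, h⟫) = fun _ => (0 : ℂ) :=
            funext fun k => (hk k).2.2 h hh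
          rw [he]
          exact tendsto_const_nhds
      haveI : CompleteSpace R := hRclosed.completeSpace_coe
      have hmemR : ∀ r : R, ∃ u, Wit u ↑r := fun r => r.2
      set uf : R → H₁ := fun r => (hmemR r).choose with hufdef
      have hufW : ∀ r : R, Wit (uf r) ↑r := fun r => (hmemR r).choose_spec
      have hufadd : ∀ r r' : R, uf (r + r') = uf r + uf r' := by
        intro r r'
        refine huniq (hufW (r + r')) ?_
        have := hWadd (hufW r) (hufW r')
        rwa [← Submodule.coe_add] at this
      have hufsmul : ∀ (cc : ℂ) (r : R), uf (cc • r) = cc • uf r := by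
        intro cc r
        refine huniq (hufW (cc • r)) ?_
        have := hWsmul cc (hufW r)
        rwa [← Submodule.coe_smul] at this
      have hufbound : ∀ r : R, ‖uf r‖ ≤ (2 * C) * ‖r‖ := by
        intro r
        have h1 := hest (uf r) _ _ (hufW r).1 (hufW r).2.1 (hufW r).2.2
        have h2 : ‖(↑r : WithLp 2 (H₂ × H₀)).fst‖ ≤ ‖r‖ := norm_fst_le_withLp _
        have h3 : ‖(↑r : WithLp 2 (H₂ × H₀)).snd‖ ≤ ‖r‖ := norm_snd_le_withLp _
        nlinarith
      set lin : R →ₗ[ℂ] H₁ :=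
        { toFun := uf
          map_add' := hufadd
          map_smul' := fun cc r => hufsmul cc r } with hlindef
      set ℓ : R →L[ℂ] ℂ := LinearMap.mkContinuous ((innerₛₗ ℂ w).comp lin) (‖w‖ * (2 * C))
        (by
          intro r
          have h1 : ‖⟪w, uf r⟫‖ ≤ ‖w‖ * ‖uf r‖ := norm_inner_le_norm w (uf r)
          have h2 := hufbound r
          have : ‖((innerₛₗ ℂ w).comp lin) r‖ = ‖⟪w, uf r⟫‖ := rfl
          rw [this]
          calc ‖⟪w, uf r⟫‖ ≤ ‖w‖ * ‖uf r‖ := h1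
            _ ≤ ‖w‖ * ((2 * C) * ‖r‖) := by
                exact mul_le_mul_of_nonneg_left h2 (norm_nonneg w)
            _ = ‖w‖ * (2 * C) * ‖r‖ := by ring) with hldef
      set r₀ : R := (InnerProductSpace.toDual ℂ R).symm ℓ with hr₀def
      have hr₀ : ∀ r : R, ⟪r₀, r⟫ = ⟪w, uf r⟫ := by
        intro r
        have h1 : ⟪r₀, r⟫ = ℓ r := InnerProductSpace.toDual_symm_apply
        rw [h1]
        rfl
      set u₀ : H₁ := uf r₀ with hu₀def
      set s₀ : H₂ := (↑r₀ : WithLp 2 (H₂ × H₀)).fst with hs₀def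
      set t₀ : H₀ := (↑r₀ : WithLp 2 (H₂ × H₀)).snd with ht₀def
      have hWit₀ : Wit u₀ ↑r₀ := hufW r₀
      have weak : ∀ u' s t, (u', s) ∈ S.graph → (u', t) ∈ T.adjoint.graph →
          (∀ h ∈ harmonicSpace T S, ⟪u', h⟫ = 0) → ⟪s₀, s⟫ + ⟪t₀, t⟫ = ⟪w, u'⟫ := by
        intro u' s t h1 h2 h3
        have hq : ((WithLp.equiv 2 (H₂ × H₀)).symm (s, t)) ∈ R := ⟨u', h1, h2, h3⟩
        have h4 := hr₀ ⟨_, hq⟩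
        have h5 : uf ⟨_, hq⟩ = u' := huniq (hufW ⟨_, hq⟩) ⟨h1, h2, h3⟩
        rw [h5] at h4
        rw [← h4]
        rfl
      have weak' : ∀ v s t, (v, s) ∈ S.graph → (v, t) ∈ T.adjoint.graph →
          ⟪s₀, s⟫ + ⟪t₀, t⟫ = ⟪w, v⟫ := by
        intro v s t h1 h2
        set hp : H₁ := ↑(Submodule.orthogonalProjectionOnto (harmonicSpace T S) v) with hhpdef
        have hhp : hp ∈ harmonicSpace T S := (Submodule.orthogonalProjectionOnto (harmonicSpace T S) v).2
        obtain ⟨hp1, hp2⟩ := mem_harmonicSpace_iff.mp hhp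
        have h3 : (v - hp, s) ∈ S.graph := by
          have h9 := S.graph.sub_mem h1 hp1
          rwa [Prod.mk_sub_mk, sub_zero] at h9
        have h4 : (v - hp, t) ∈ T.adjoint.graph := by
          have h9 := T.adjoint.graph.sub_mem h2 hp2
          rwa [Prod.mk_sub_mk, sub_zero] at h9
        have h5 : ∀ h ∈ harmonicSpace T S, ⟪v - hp, h⟫ = 0 := by
          intro h hh
          have h6 := Submodule.sub_starProjection_mem_orthogonal (K := harmonicSpace T S) v
          exact ((harmonicSpace T S).mem_orthogonal' _).mp h6 h hh
        have h6 := weak _ _ _ h3 h4 h5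
        rw [inner_sub_right, hw hp hhp, sub_zero] at h6
        exact h6
      set cv : H₁ := ↑(Submodule.orthogonalProjectionOnto (kerSM T.adjoint) w) with hcvdef
      set dv : H₁ := ↑(Submodule.orthogonalProjectionOnto (kerSM S) w) with hdvdef
      have hcS : (s₀, cv) ∈ S.adjoint.graph := by
        rw [mem_adjoint_graph_iff' S hSdense]
        intro x
        set v₂ : H₁ := ↑(Submodule.orthogonalProjectionOnto (kerSM T.adjoint) (↑x : H₁)) with hv₂def
        have h1 : (↑x : H₁) - v₂ ∈ kerSM S :=
          hNorth (Submodule.sub_starProjection_mem_orthogonal (↑x : H₁))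
        have h2 : (v₂, S x) ∈ S.graph := by
          have h4 : ((↑x : H₁) - v₂, (0 : H₂)) ∈ S.graph := mem_kerSM.mp h1
          have h5 := S.graph.sub_mem (S.mem_graph x) h4
          rwa [Prod.mk_sub_mk, sub_zero, sub_sub_cancel] at h5
        have h5 : (v₂, (0 : H₀)) ∈ T.adjoint.graph :=
          mem_kerSM.mp (Submodule.orthogonalProjectionOnto (kerSM T.adjoint) (↑x : H₁)).2
        have h6 := weak' v₂ (S x) 0 h2 h5
        rw [inner_zero_right, add_zero] at h6
        rw [h6]
        exact Submodule.inner_starProjection_left_eq_right _ w (↑x : H₁)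
      have hdT : (t₀, dv) ∈ T.graph := by
        apply mem_graph_of_inner T hTclosed hTdense
        intro y z hyz
        set v' : H₁ := ↑(Submodule.orthogonalProjectionOnto (kerSM S) y) with hv'def
        have h1 : y - v' ∈ kerSM T.adjoint :=
          hMorth (Submodule.sub_starProjection_mem_orthogonal y)
        have h2 : (v', z) ∈ T.adjoint.graph := by
          have h4 : (y - v', (0 : H₀)) ∈ T.adjoint.graph := mem_kerSM.mp h1
          have h5 := T.adjoint.graph.sub_mem hyz h4
          rwa [Prod.mk_sub_mk, sub_zero, sub_sub_cancel] at h5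
        have h5 : (v', (0 : H₂)) ∈ S.graph := mem_kerSM.mp (Submodule.orthogonalProjectionOnto (kerSM S) y).2
        have h6 := weak' v' 0 z h5 h2
        rw [inner_zero_right, zero_add] at h6
        have h7 : ⟪w, v'⟫ = ⟪dv, y⟫ := (Submodule.inner_starProjection_left_eq_right _ w y).symm
        calc ⟪y, dv⟫ = (starRingEnd ℂ) ⟪dv, y⟫ := (inner_conj_symm _ _).symm
          _ = (starRingEnd ℂ) ⟪w, v'⟫ := by rw [h7]
          _ = (starRingEnd ℂ) ⟪t₀, z⟫ := by rw [h6]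
          _ = ⟪z, t₀⟫ := inner_conj_symm _ _
      have hwc : w - cv ∈ kerSM S := hNorth (Submodule.sub_starProjection_mem_orthogonal w)
      have hcMo : cv ∈ (kerSM S)ᗮ := by
        rw [Submodule.mem_orthogonal]
        intro h' hh'
        have key : ⟪cv, h'⟫ = 0 := by
          set h₂ : H₁ := ↑(Submodule.orthogonalProjectionOnto (kerSM T.adjoint) h') with hh₂def
          have e1 : h' - h₂ ∈ kerSM S := hNorth (Submodule.sub_starProjection_mem_orthogonal h')
          have e2 : h₂ ∈ kerSM S := by
            have heq : h₂ = h' - (h' - h₂) := by abel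
            rw [heq]
            exact Submodule.sub_mem _ hh' e1
          have e3 : h₂ ∈ harmonicSpace T S := by
            rw [harmonicSpace_eq]
            exact Submodule.mem_inf.mpr ⟨e2, (Submodule.orthogonalProjectionOnto (kerSM T.adjoint) h').2⟩
          have e4 : ⟪cv, h' - h₂⟫ = 0 := by
            have hcN : cv ∈ kerSM T.adjoint := (Submodule.orthogonalProjectionOnto (kerSM T.adjoint) w).2
            have h6 := Submodule.sub_starProjection_mem_orthogonal (K := kerSM T.adjoint) h'
            exact ((kerSM T.adjoint).mem_orthogonal _).mp h6 cv hcN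
          have e6 : ⟪w - cv, h₂⟫ = 0 := by
            have hwcN : w - cv ∈ (kerSM T.adjoint)ᗮ :=
              Submodule.sub_starProjection_mem_orthogonal w
            exact ((kerSM T.adjoint).mem_orthogonal' _).mp hwcN h₂
              (Submodule.orthogonalProjectionOnto (kerSM T.adjoint) h').2
          have e7 : ⟪w, h₂⟫ = 0 := hw h₂ e3
          calc ⟪cv, h'⟫ = ⟪cv, h' - h₂⟫ + ⟪cv, h₂⟫ := by
                rw [← inner_add_right, sub_add_cancel]
            _ = ⟪cv, h₂⟫ := by rw [e4, zero_add]
            _ = ⟪w, h₂⟫ - ⟪w - cv, h₂⟫ := by rw [inner_sub_left]; ring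
            _ = 0 := by rw [e6, e7, sub_zero]
        exact inner_eq_zero_symm.mp key
      have hdveq : dv = w - cv := by
        have h9 := Submodule.eq_starProjection_of_mem_orthogonal (K := kerSM S)
          (u := w) (v := w - cv) hwc (by simpa using hcMo)
        exact h9
      have hsum : w = cv + dv := by rw [hdveq]; abel
      exact ⟨u₀, s₀, t₀, cv, dv, hWit₀.1, hcS, hWit₀.2.1, hdT, hsum⟩
  -- Part 3 : closedness
  have part3 : IsClosed {w : H₁ | ∀ h ∈ harmonicSpace T S, ⟪w, h⟫ = 0} := by
    have hset : {w : H₁ | ∀ h ∈ harmonicSpace T S, ⟪w, h⟫ = 0} =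
        ⋂ h : harmonicSpace T S, {w : H₁ | ⟪w, (h : H₁)⟫ = 0} := by
      ext v
      simp only [Set.mem_setOf_eq, Set.mem_iInter]
      exact ⟨fun hv h => hv ↑h h.2, fun hv h hh => hv ⟨h, hh⟩⟩
    rw [hset]
    exact isClosed_iInter fun h =>
      isClosed_eq (continuous_id.inner continuous_const) continuous_const
  exact ⟨part1, part2, part2 ▸ part3⟩
end
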